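/- arXiv:2102.08272 — 3 statements merged into one kernel-verified Lean document; each statement's English description precedes it below -/
import Mathlib

section
/- Let 0 < δ₀ ≤ 10^{−10} and γ ∈ 𝔊₃(δ₀). Let ξ = (ξ₁,ξ₂,ξ₃) ∈ ℝ³, ξ ≠ 0, satisfy ξ₃ ≥ (9/10)|ξ| and |ξ_j| ≤ 8 δ₀ |ξ| for j = 1, 2. Then the equation ⟨γ''(s), ξ⟩ = 0 has exactly one solution s* in [−1,1]; moreover |s*| ≤ 16 δ₀, and s* is the unique global minimizer on [−1,1] of the function s ↦ ⟨γ'(s), ξ⟩, that is, ⟨γ'(s), ξ⟩ > ⟨γ'(s*), ξ⟩ for every s ∈ [−1,1] with s ≠ s*. -/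
open MeasureTheory Real Set
open scoped InnerProductSpace ENNReal NNReal

noncomputable section

/-- The moment curve `γ∘(s) = (s, s²/2, s³/6)` in `ℝ³`. -/
def momentCurve (s : ℝ) : EuclideanSpace ℝ (Fin 3) :=
  (EuclideanSpace.equiv (Fin 3) ℝ).symm ![s, s ^ 2 / 2, s ^ 3 / 6]

/-!
Write `f s = ⟪γ''(s), ξ⟫`, the derivative of `g s = ⟪γ'(s), ξ⟫`. For the moment curve
`f s = ξ₂ + s ξ₃` and `f' = ξ₃ ≥ (9/10)|ξ|`; the closeness of `γ''` and `γ'''` to the model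
perturbs these by at most `δ₀ |ξ|`. Hence `f` is strictly increasing on `[-1, 1]` and changes
sign on `[-16 δ₀, 16 δ₀]`, so it has exactly one zero `s*` there, and `g`, decreasing before
`s*` and increasing after it, has its strict minimum at `s*`.
-/

local notation "e" => fun (j : Fin 3) => EuclideanSpace.single j (1 : ℝ)

lemma momentCurve_eq_sum_smul :
    momentCurve = fun s => s • e 0 + (s ^ 2 / 2) • e 1 + (s ^ 3 / 6) • e 2 := by
  funext s
  ext i
  fin_cases i <;> simp [momentCurve]

lemma hasDerivAt_momentCurve (s : ℝ) :
    HasDerivAt momentCurve (e 0 + s • e 1 + (s ^ 2 / 2) • e 2) s := by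
  rw [momentCurve_eq_sum_smul]
  refine ((((hasDerivAt_id s).smul_const (e 0)).fun_add
    (((hasDerivAt_pow 2 s).div_const 2).smul_const (e 1))).fun_add
    (((hasDerivAt_pow 3 s).div_const 6).smul_const (e 2))).congr_deriv ?_
  norm_num
  ring_nf

lemma iteratedDeriv_two_momentCurve :
    iteratedDeriv 2 momentCurve = fun s => e 1 + s • e 2 := by
  have hderiv : deriv momentCurve = fun s => e 0 + s • e 1 + (s ^ 2 / 2) • e 2 :=
    funext fun s => (hasDerivAt_momentCurve s).deriv
  rw [iteratedDeriv_succ, iteratedDeriv_one, hderiv]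
  funext s
  refine (((hasDerivAt_const s (e 0)).fun_add ((hasDerivAt_id s).smul_const (e 1))).fun_add
    (((hasDerivAt_pow 2 s).div_const 2).smul_const (e 2))).deriv.trans ?_
  norm_num

lemma iteratedDeriv_three_momentCurve :
    iteratedDeriv 3 momentCurve = fun _ => e 2 := by
  rw [iteratedDeriv_succ, iteratedDeriv_two_momentCurve]
  funext s
  simpa using ((hasDerivAt_const s (e 1)).add ((hasDerivAt_id s).smul_const (e 2))).deriv

lemma inner_iteratedDeriv_two_momentCurve (ξ : EuclideanSpace ℝ (Fin 3)) (s : ℝ) :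
    ⟪iteratedDeriv 2 momentCurve s, ξ⟫_ℝ = ξ 1 + s * ξ 2 := by
  simp [iteratedDeriv_two_momentCurve, inner_add_left, real_inner_smul_left,
    EuclideanSpace.inner_single_left]

lemma inner_iteratedDeriv_three_momentCurve (ξ : EuclideanSpace ℝ (Fin 3)) (s : ℝ) :
    ⟪iteratedDeriv 3 momentCurve s, ξ⟫_ℝ = ξ 2 := by
  simp [iteratedDeriv_three_momentCurve, EuclideanSpace.inner_single_left]

lemma abs_inner_sub_inner_le {E : Type*} [NormedAddCommGroup E] [InnerProductSpace ℝ E]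
    {u v : E} {δ : ℝ} (huv : ‖u - v‖ ≤ δ) (ξ : E) :
    |⟪u, ξ⟫_ℝ - ⟪v, ξ⟫_ℝ| ≤ δ * ‖ξ‖ := by
  rw [← inner_sub_left]
  exact (abs_real_inner_le_norm _ _).trans (by gcongr)

lemma hasDerivAt_inner_iteratedDeriv {E : Type*} [NormedAddCommGroup E]
    [InnerProductSpace ℝ E] {γ : ℝ → E} (hγ : ContDiff ℝ (⊤ : ℕ∞) γ) (ξ : E) (n : ℕ)
    (s : ℝ) :
    HasDerivAt (fun t => ⟪iteratedDeriv n γ t, ξ⟫_ℝ) ⟪iteratedDeriv (n + 1) γ s, ξ⟫_ℝ s := by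
  have hdiff : Differentiable ℝ (iteratedDeriv n γ) :=
    hγ.differentiable_iteratedDeriv n (by exact_mod_cast WithTop.coe_lt_top _)
  rw [iteratedDeriv_succ]
  simpa using (hdiff s).hasDerivAt.inner ℝ (hasDerivAt_const s ξ)

lemma lt_of_hasDerivAt_of_strictMonoOn {f g : ℝ → ℝ} {a b s₀ s : ℝ}
    (hg : ∀ x, HasDerivAt g (f x) x) (hf : StrictMonoOn f (Icc a b))
    (hs₀ : s₀ ∈ Icc a b) (hf₀ : f s₀ = 0) (hs : s ∈ Icc a b) (hne : s ≠ s₀) :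
    g s₀ < g s := by
  have hgc : Continuous g := continuous_iff_continuousAt.2 fun x => (hg x).continuousAt
  rcases hne.lt_or_gt with hlt | hgt
  · have hanti : StrictAntiOn g (Icc s s₀) := by
      refine strictAntiOn_of_deriv_neg (convex_Icc _ _) hgc.continuousOn fun x hx => ?_
      rw [interior_Icc] at hx
      rw [(hg x).deriv, ← hf₀]
      exact hf ⟨hs.1.trans hx.1.le, hx.2.le.trans hs₀.2⟩ hs₀ hx.2
    exact hanti (left_mem_Icc.2 hlt.le) (right_mem_Icc.2 hlt.le) hlt
  · have hmono : StrictMonoOn g (Icc s₀ s) := by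
      refine strictMonoOn_of_deriv_pos (convex_Icc _ _) hgc.continuousOn fun x hx => ?_
      rw [interior_Icc] at hx
      rw [(hg x).deriv, ← hf₀]
      exact hf hs₀ ⟨hs₀.1.trans hx.1.le, hx.2.le.trans hs.2⟩ hx.1
    exact hmono (left_mem_Icc.2 hgt.le) (right_mem_Icc.2 hgt.le) hgt

theorem statement5_general
    (δ₀ : ℝ) (hδ₀pos : 0 < δ₀) (hδ₀small : δ₀ ≤ (10 : ℝ) ^ (-(10 : ℤ)))
    (γ : ℝ → EuclideanSpace ℝ (Fin 3)) (hγ : ContDiff ℝ (⊤ : ℕ∞) γ)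
    (hγclose : ∀ j : ℕ, 1 ≤ j → j ≤ 4 → ∀ s ∈ Set.Icc (-1 : ℝ) 1,
      ‖iteratedDeriv j γ s - iteratedDeriv j momentCurve s‖ ≤ δ₀)
    (ξ : EuclideanSpace ℝ (Fin 3)) (hξ : ξ ≠ 0)
    (hξ3 : (9 / 10) * ‖ξ‖ ≤ ξ 2)
    (hξ2 : |ξ 1| ≤ 8 * δ₀ * ‖ξ‖) :
    ∃ s' ∈ Set.Icc (-1 : ℝ) 1,
      ⟪iteratedDeriv 2 γ s', ξ⟫_ℝ = 0 ∧
      |s'| ≤ 16 * δ₀ ∧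
      (∀ s ∈ Set.Icc (-1 : ℝ) 1, ⟪iteratedDeriv 2 γ s, ξ⟫_ℝ = 0 → s = s') ∧
      (∀ s ∈ Set.Icc (-1 : ℝ) 1, s ≠ s' →
        ⟪iteratedDeriv 1 γ s', ξ⟫_ℝ < ⟪iteratedDeriv 1 γ s, ξ⟫_ℝ) := by
  set f : ℝ → ℝ := fun s => ⟪iteratedDeriv 2 γ s, ξ⟫_ℝ
  have hξpos : 0 < ‖ξ‖ := norm_pos_iff.2 hξ
  have hδ : δ₀ ≤ 1 / 10 ^ 10 := by simpa using hδ₀small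
  have hf_cont : Continuous f := continuous_iff_continuousAt.2 fun x =>
    (hasDerivAt_inner_iteratedDeriv hγ ξ 2 x).continuousAt
  have hf_near : ∀ s ∈ Icc (-1 : ℝ) 1, |f s - (ξ 1 + s * ξ 2)| ≤ δ₀ * ‖ξ‖ := fun s hs => by
    simpa [f, inner_iteratedDeriv_two_momentCurve] using
      abs_inner_sub_inner_le (hγclose 2 (by norm_num) (by norm_num) s hs) ξ
  have hf_mono : StrictMonoOn f (Icc (-1) 1) := by
    refine strictMonoOn_of_deriv_pos (convex_Icc _ _) hf_cont.continuousOn fun x hx => ?_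
    rw [interior_Icc] at hx
    have h := abs_le.1 <| abs_inner_sub_inner_le
      (hγclose 3 (by norm_num) (by norm_num) x (Ioo_subset_Icc_self hx)) ξ
    rw [inner_iteratedDeriv_three_momentCurve] at h
    rw [(hasDerivAt_inner_iteratedDeriv hγ ξ 2 x).deriv]
    nlinarith
  have hr : 16 * δ₀ ∈ Icc (-1 : ℝ) 1 := ⟨by linarith, by linarith⟩
  have hl : -(16 * δ₀) ∈ Icc (-1 : ℝ) 1 := ⟨by linarith, by linarith⟩
  have hξ2_bounds := abs_le.1 hξ2
  have hf_left : f (-(16 * δ₀)) ≤ 0 := by nlinarith [abs_le.1 (hf_near _ hl)]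
  have hf_right : 0 ≤ f (16 * δ₀) := by nlinarith [abs_le.1 (hf_near _ hr)]
  obtain ⟨s', ⟨hs'l, hs'r⟩, hfs'⟩ :=
    intermediate_value_Icc (by linarith) hf_cont.continuousOn ⟨hf_left, hf_right⟩
  have hs' : s' ∈ Icc (-1 : ℝ) 1 := ⟨hl.1.trans hs'l, hs'r.trans hr.2⟩
  refine ⟨s', hs', hfs', abs_le.2 ⟨hs'l, hs'r⟩, ?_, ?_⟩
  · exact fun s hs hfs => hf_mono.injOn hs hs' (hfs.trans hfs'.symm)
  · exact fun s hs hne => lt_of_hasDerivAt_of_strictMonoOn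
      (hasDerivAt_inner_iteratedDeriv hγ ξ 1) hf_mono hs' hfs' hs hne

theorem statement5
    (δ₀ : ℝ) (hδ₀pos : 0 < δ₀) (hδ₀small : δ₀ ≤ (10 : ℝ) ^ (-(10 : ℤ)))
    (γ : ℝ → EuclideanSpace ℝ (Fin 3)) (hγ : ContDiff ℝ (⊤ : ℕ∞) γ)
    (hγ0 : γ 0 = 0)
    (hγder : ∀ j : Fin 3, iteratedDeriv ((j : ℕ) + 1) γ 0 = EuclideanSpace.single j 1)
    (hγclose : ∀ j : ℕ, 1 ≤ j → j ≤ 4 → ∀ s ∈ Set.Icc (-1 : ℝ) 1,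
      ‖iteratedDeriv j γ s - iteratedDeriv j momentCurve s‖ ≤ δ₀)
    (ξ : EuclideanSpace ℝ (Fin 3)) (hξ : ξ ≠ 0)
    (hξ3 : (9 / 10) * ‖ξ‖ ≤ ξ 2)
    (hξ1 : |ξ 0| ≤ 8 * δ₀ * ‖ξ‖) (hξ2 : |ξ 1| ≤ 8 * δ₀ * ‖ξ‖) :
    ∃ s' ∈ Set.Icc (-1 : ℝ) 1,
      ⟪iteratedDeriv 2 γ s', ξ⟫_ℝ = 0 ∧
      |s'| ≤ 16 * δ₀ ∧
      (∀ s ∈ Set.Icc (-1 : ℝ) 1, ⟪iteratedDeriv 2 γ s, ξ⟫_ℝ = 0 → s = s') ∧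
      (∀ s ∈ Set.Icc (-1 : ℝ) 1, s ≠ s' →
        ⟪iteratedDeriv 1 γ s', ξ⟫_ℝ < ⟪iteratedDeriv 1 γ s, ξ⟫_ℝ) :=
  statement5_general δ₀ hδ₀pos hδ₀small γ hγ hγclose ξ hξ hξ3 hξ2
end
end

section
/- Let N ∈ ℕ₀ and C₀, C₁, …, C_{N+1} ≥ 1. There exists a constant C(N), depending only on N and C₀, …, C_{N+1}, with the following property. Let I ⊆ ℝ be an open interval, a ∈ C_c^∞(ℝ) supported in I, φ ∈ C^∞(I) real-valued, and R ≥ 1, and suppose that for every s in the support of a: (i) φ'(s) ≠ 0; (ii) |φ^{(j)}(s)| ≤ C_j R^{−(j−1)} |φ'(s)|^j for 2 ≤ j ≤ N+1; (iii) |a^{(j)}(s)| ≤ C_j R^{−j} |φ'(s)|^j for 0 ≤ j ≤ N+1. Then |∫_ℝ e^{i φ(s)} a(s) ds| ≤ C(N) · |supp a| · R^{−N}, where |supp a| denotes the Lebesgue measure of the support of a. -/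
/-!
Non-stationary phase by repeated integration by parts. Writing `c = 1 / φ'` and
`L b = (b c)'`, one has `e^{iφ} b = (e^{iφ})' b c / i`, so integrating by parts gives
`∫ e^{iφ} b = i ∫ e^{iφ} L b`, and after `N` steps `|∫ e^{iφ} a| = |∫ e^{iφ} Lᴺ a|`.
At a point `s` of the support put `ρ = |φ'(s)| / R`. The hypotheses say that the `j`-th
derivatives of `a` and `φ'` are `O(ρ ^ j)` and `O(|φ'(s)| ρ ^ j)`; differentiating
`c' = -φ'' c²` then gives `c⁽ʲ⁾(s) = O(ρ ^ j / |φ'(s)|)`, and by the Leibniz rule each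
application of `L` costs one derivative and gains a factor `ρ / |φ'(s)| = 1 / R`.
Hence `|Lᴺ a| = O(R⁻ᴺ)` on the support, which is all that is integrated.
-/

open MeasureTheory Real Set Filter Topology Complex
open scoped ContDiff

def DerivsBoundedAt {𝕜 F : Type*} [NontriviallyNormedField 𝕜] [NormedAddCommGroup F]
    [NormedSpace 𝕜 F] (f : 𝕜 → F) (x : 𝕜) (n : ℕ) (M ρ : ℝ) : Prop :=
  ∀ j ≤ n, ‖iteratedDeriv j f x‖ ≤ M * ρ ^ j

namespace DerivsBoundedAt

variable {𝕜 : Type*} [NontriviallyNormedField 𝕜] {F : Type*} [NormedAddCommGroup F]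
  [NormedSpace 𝕜 F] {f : 𝕜 → F} {x : 𝕜} {n : ℕ} {M ρ : ℝ}

theorem nonneg (h : DerivsBoundedAt f x n M ρ) : 0 ≤ M := by
  simpa using (norm_nonneg _).trans (h 0 n.zero_le)

theorem mono (h : DerivsBoundedAt f x n M ρ) {m : ℕ} {M' : ℝ} (hm : m ≤ n) (hM : M ≤ M')
    (hρ : 0 ≤ ρ) : DerivsBoundedAt f x m M' ρ :=
  fun j hj ↦ (h j (hj.trans hm)).trans (by gcongr)

protected theorem deriv (h : DerivsBoundedAt f x (n + 1) M ρ) :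
    DerivsBoundedAt (deriv f) x n (M * ρ) ρ := fun j hj ↦ by
  rw [← iteratedDeriv_succ', mul_assoc, ← pow_succ']
  exact h (j + 1) (by omega)

theorem comp_linearIsometry {G : Type*} [NormedAddCommGroup G] [NormedSpace 𝕜 G]
    (L : F →ₗᵢ[𝕜] G) (hf : ContDiffAt 𝕜 n f x) (h : DerivsBoundedAt f x n M ρ) :
    DerivsBoundedAt (L ∘ f) x n M ρ := fun j hj ↦ by
  rw [← norm_iteratedFDeriv_eq_norm_iteratedDeriv,
    L.norm_iteratedFDeriv_comp_left hf (by exact_mod_cast hj),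
    norm_iteratedFDeriv_eq_norm_iteratedDeriv]
  exact h j hj

variable {𝔸 : Type*} [NormedRing 𝔸] [NormOneClass 𝔸] [NormedAlgebra 𝕜 𝔸] {f g : 𝕜 → 𝔸} {M' : ℝ}

theorem mul (hf : ContDiffAt 𝕜 n f x) (hg : ContDiffAt 𝕜 n g x)
    (hfB : DerivsBoundedAt f x n M ρ) (hgB : DerivsBoundedAt g x n M' ρ) (hρ : 0 ≤ ρ) :
    DerivsBoundedAt (f * g) x n (2 ^ n * M * M') ρ := by
  intro j hj
  have hjn : (j : WithTop ℕ∞) ≤ n := by exact_mod_cast hj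
  rw [iteratedDeriv_mul (hf.of_le hjn) (hg.of_le hjn)]
  have hM := hfB.nonneg
  have hM' := hgB.nonneg
  calc ‖∑ i ∈ Finset.range (j + 1),
          (j.choose i : 𝔸) * iteratedDeriv i f x * iteratedDeriv (j - i) g x‖
      ≤ ∑ i ∈ Finset.range (j + 1), (j.choose i : ℝ) * (M * ρ ^ i) * (M' * ρ ^ (j - i)) := by
        refine (norm_sum_le _ _).trans (Finset.sum_le_sum fun i hi ↦ ?_)
        have hij : i ≤ j := Finset.mem_range_succ_iff.mp hi
        refine (norm_mul_le _ _).trans ((mul_le_mul_of_nonneg_right (norm_mul_le _ _)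
          (norm_nonneg _)).trans ?_)
        gcongr
        · exact (Nat.norm_cast_le _).trans (by simp)
        · exact hfB i (hij.trans hj)
        · exact hgB (j - i) (by omega)
    _ = ∑ i ∈ Finset.range (j + 1), (j.choose i : ℝ) * (M * M' * ρ ^ j) := by
        refine Finset.sum_congr rfl fun i hi ↦ ?_
        rw [← pow_mul_pow_sub ρ (Finset.mem_range_succ_iff.mp hi)]
        ring
    _ = 2 ^ j * M * M' * ρ ^ j := by
        rw [← Finset.sum_mul, ← Nat.cast_sum, Nat.sum_range_choose]
        push_cast
        ring
    _ ≤ 2 ^ n * M * M' * ρ ^ j := by gcongr; exact one_le_two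

theorem iterate_deriv_mul {b c : 𝕜 → 𝔸} {A : ℝ} (hb : ContDiffAt 𝕜 n b x)
    (hc : ContDiffAt 𝕜 n c x) (hbB : DerivsBoundedAt b x n M ρ)
    (hcB : DerivsBoundedAt c x n A ρ) (hρ : 0 ≤ ρ) {k : ℕ} (hk : k ≤ n) :
    ContDiffAt 𝕜 (n - k : ℕ) ((fun f ↦ deriv (f * c))^[k] b) x ∧
      DerivsBoundedAt ((fun f ↦ deriv (f * c))^[k] b) x (n - k)
        ((2 ^ n * A * ρ) ^ k * M) ρ := by
  induction k with
  | zero => simpa using ⟨hb, hbB⟩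
  | succ k ih =>
    obtain ⟨hsmooth, hbound⟩ := ih (by omega)
    have hnk : n - k = n - (k + 1) + 1 := by omega
    rw [hnk] at hsmooth hbound
    have hc' : ContDiffAt 𝕜 (n - (k + 1) + 1 : ℕ) c x := hc.of_le (by exact_mod_cast by omega)
    rw [Function.iterate_succ_apply']
    refine ⟨(hsmooth.mul hc').derivWithin (by push_cast; rfl), ?_⟩
    refine ((hbound.mul hsmooth hc' (hcB.mono (by omega) le_rfl hρ) hρ).deriv).mono le_rfl ?_ hρ
    have := hbound.nonneg
    have := hcB.nonneg
    calc 2 ^ (n - (k + 1) + 1) * ((2 ^ n * A * ρ) ^ k * M) * A * ρ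
        ≤ 2 ^ n * ((2 ^ n * A * ρ) ^ k * M) * A * ρ := by
          gcongr
          exacts [one_le_two, by omega]
      _ = (2 ^ n * A * ρ) ^ (k + 1) * M := by ring

end DerivsBoundedAt

/-- The constants grow according to `(1 / g)' = -g' (1 / g) ^ 2` and the Leibniz rule. -/
def invDerivConst (M : ℝ) : ℕ → ℝ
  | 0 => 1
  | n + 1 => max (invDerivConst M n) (4 ^ n * M * invDerivConst M n ^ 2)

theorem one_le_invDerivConst (M : ℝ) : ∀ n, 1 ≤ invDerivConst M n
  | 0 => le_rfl
  | n + 1 => le_max_of_le_left (one_le_invDerivConst M n)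

theorem DerivsBoundedAt.inv {𝕜 : Type*} [NontriviallyNormedField 𝕜] {g : 𝕜 → 𝕜} {x : 𝕜}
    {n : ℕ} {M ρ : ℝ} (hg : ContDiffAt 𝕜 n g x) (hgx : g x ≠ 0)
    (hgB : DerivsBoundedAt g x n (M * ‖g x‖) ρ) (hρ : 0 ≤ ρ) :
    DerivsBoundedAt g⁻¹ x n (invDerivConst M n / ‖g x‖) ρ := by
  induction n with
  | zero =>
    intro j hj
    obtain rfl : j = 0 := by omega
    simp [invDerivConst]
  | succ n ih =>
    have hinv : DerivsBoundedAt g⁻¹ x n (invDerivConst M n / ‖g x‖) ρ :=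
      ih (hg.of_le (by exact_mod_cast n.le_succ)) (hgB.mono n.le_succ le_rfl hρ)
    intro j hj
    rcases hj.lt_or_eq with hj | rfl
    · refine (hinv j (by omega)).trans ?_
      gcongr
      exact le_max_left _ _
    have hev : deriv g⁻¹ =ᶠ[𝓝 x] -(deriv g * (g⁻¹ * g⁻¹)) := by
      filter_upwards [hg.eventually (by simp), hg.continuousAt.eventually_ne hgx] with y hy hy0
      rw [((hy.differentiableAt (by simp)).hasDerivAt.inv hy0).deriv]
      simp only [Pi.neg_apply, Pi.mul_apply, Pi.inv_apply]
      field_simp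
    have hg' : ContDiffAt 𝕜 n (deriv g) x := hg.derivWithin (by push_cast; rfl)
    have hginv : ContDiffAt 𝕜 n g⁻¹ x := (hg.inv hgx).of_le (by exact_mod_cast n.le_succ)
    have hprod := hgB.deriv.mul hg' (hginv.mul hginv) (hinv.mul hginv hginv hinv hρ) hρ
    rw [iteratedDeriv_succ', hev.iteratedDeriv_eq, iteratedDeriv_neg, norm_neg]
    have hgpos : 0 < ‖g x‖ := norm_pos_iff.mpr hgx
    calc ‖iteratedDeriv n (deriv g * (g⁻¹ * g⁻¹)) x‖
        ≤ 2 ^ n * (M * ‖g x‖ * ρ) * (2 ^ n * (invDerivConst M n / ‖g x‖) *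
            (invDerivConst M n / ‖g x‖)) * ρ ^ n := hprod n le_rfl
      _ = 4 ^ n * M * invDerivConst M n ^ 2 / ‖g x‖ * ρ ^ (n + 1) := by
          rw [show (4 : ℝ) ^ n = 2 ^ n * 2 ^ n by rw [← mul_pow]; norm_num]
          field_simp
          ring
      _ ≤ invDerivConst M (n + 1) / ‖g x‖ * ρ ^ (n + 1) := by
          gcongr
          exact le_max_right _ _

theorem contDiff_of_tsupport {𝕜 E F : Type*} [NontriviallyNormedField 𝕜] [NormedAddCommGroup E]
    [NormedSpace 𝕜 E] [NormedAddCommGroup F] [NormedSpace 𝕜 F] {f : E → F} {n : WithTop ℕ∞}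
    (hf : ∀ x ∈ tsupport f, ContDiffAt 𝕜 n f x) : ContDiff 𝕜 n f :=
  contDiff_iff_contDiffAt.2 fun x ↦ (em _).elim (hf x) fun hx ↦
    contDiffAt_const.congr_of_eventuallyEq (notMem_tsupport_iff_eventuallyEq.mp hx)

theorem tsupport_iterate_deriv_mul_subset {𝕜 𝔸 : Type*} [NontriviallyNormedField 𝕜]
    [NormedRing 𝔸] [NormedAlgebra 𝕜 𝔸] {b c : 𝕜 → 𝔸} (k : ℕ) :
    tsupport ((fun f ↦ deriv (f * c))^[k] b) ⊆ tsupport b := by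
  induction k with
  | zero => exact subset_rfl
  | succ k ih =>
    rw [Function.iterate_succ_apply']
    exact tsupport_deriv_subset.trans (tsupport_mul_subset_left.trans ih)

section OscillatoryIntegral

variable {φ : ℝ → ℝ} {b c : ℝ → ℂ}

theorem integrable_cexp_mul (hb : Continuous b) (hbs : HasCompactSupport b)
    (hφ : ∀ x ∈ tsupport b, ContinuousAt φ x) :
    Integrable fun x ↦ cexp (I * φ x) * b x := by
  refine Continuous.integrable_of_hasCompactSupport
    (continuous_of_tsupport fun x hx ↦ ?_) hbs.mul_left
  have hx : x ∈ tsupport b := tsupport_mul_subset_right hx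
  exact ((continuous_ofReal.continuousAt.comp (hφ x hx)).const_mul I).cexp.mul hb.continuousAt

theorem norm_integral_cexp_mul_le {K : Set ℝ} {C : ℝ} (hK : IsCompact K)
    (hbK : ∀ x ∉ K, b x = 0) (hbC : ∀ x ∈ K, ‖b x‖ ≤ C) :
    ‖∫ x, cexp (I * φ x) * b x‖ ≤ C * (volume K).toReal := by
  rw [← setIntegral_eq_integral_of_forall_compl_eq_zero fun x hx ↦ by simp [hbK x hx]]
  exact norm_setIntegral_le_of_norm_le_const hK.measure_lt_top fun x hx ↦ by
    simpa using hbC x hx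

theorem integral_cexp_mul_eq_I_mul_integral_deriv_mul
    (hφ : ∀ x ∈ tsupport b, DifferentiableAt ℝ φ x)
    (hcφ : ∀ x ∈ tsupport b, ((deriv φ x : ℝ) : ℂ) * c x = 1)
    (hb : Continuous b) (hbs : HasCompactSupport b) (hbc : ContDiff ℝ 1 (b * c)) :
    ∫ x, cexp (I * φ x) * b x = I * ∫ x, cexp (I * φ x) * deriv (b * c) x := by
  have hsupp : tsupport (b * c) ⊆ tsupport b := tsupport_mul_subset_left
  have hφc : ∀ x ∈ tsupport b, ContinuousAt φ x := fun x hx ↦ (hφ x hx).continuousAt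
  have hbcs : HasCompactSupport (b * c) := hbs.mono' (subset_tsupport _ |>.trans hsupp)
  have hu : ∀ x ∈ tsupport (b * c),
      HasDerivAt (fun x ↦ cexp (I * φ x)) (cexp (I * φ x) * (I * deriv φ x)) x :=
    fun x hx ↦ (((hφ x (hsupp hx)).hasDerivAt.ofReal_comp).const_mul I).cexp
  have hv : ∀ x, HasDerivAt (b * c) (deriv (b * c) x) x :=
    fun x ↦ ((hbc.differentiable one_ne_zero) x).hasDerivAt
  have hu'v : ∀ x, cexp (I * φ x) * (I * deriv φ x) * (b * c) x = I * (cexp (I * φ x) * b x) := by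
    intro x
    by_cases hx : x ∈ tsupport b
    · rw [Pi.mul_apply]
      linear_combination (I * cexp (I * φ x) * b x) * hcφ x hx
    · simp [image_eq_zero_of_notMem_tsupport hx]
  have hparts := integral_mul_deriv_eq_deriv_mul_of_integrable hu (fun x _ ↦ hv x)
    (integrable_cexp_mul (hbc.continuous_deriv_one) hbcs.deriv
      fun x hx ↦ hφc x (hsupp (tsupport_deriv_subset hx)))
    (((integrable_cexp_mul hb hbs hφc).const_mul I).congr
      (Eventually.of_forall fun x ↦ (hu'v x).symm))
    (integrable_cexp_mul hbc.continuous hbcs fun x hx ↦ hφc x (hsupp hx))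
  simp only [hu'v, integral_const_mul] at hparts
  linear_combination (-I) * hparts + (∫ x, cexp (I * φ x) * b x) * I_mul_I

theorem norm_integral_cexp_mul_eq_iterate_deriv_mul
    (hφ : ∀ x ∈ tsupport b, DifferentiableAt ℝ φ x) (hc : ∀ x ∈ tsupport b, ContDiffAt ℝ ∞ c x)
    (hcφ : ∀ x ∈ tsupport b, ((deriv φ x : ℝ) : ℂ) * c x = 1)
    (hb : ContDiff ℝ ∞ b) (hbs : HasCompactSupport b) (k : ℕ) :
    ‖∫ x, cexp (I * φ x) * b x‖ =
      ‖∫ x, cexp (I * φ x) * ((fun f ↦ deriv (f * c))^[k] b) x‖ := by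
  induction k generalizing b with
  | zero => rfl
  | succ k ih =>
    have hbc : ContDiff ℝ ∞ (b * c) := contDiff_of_tsupport fun x hx ↦
      hb.contDiffAt.mul (hc x (tsupport_mul_subset_left hx))
    have hsupp : tsupport (deriv (b * c)) ⊆ tsupport b :=
      tsupport_deriv_subset.trans tsupport_mul_subset_left
    rw [integral_cexp_mul_eq_I_mul_integral_deriv_mul hφ hcφ hb.continuous hbs
      (hbc.of_le (by simp)), norm_mul, norm_I, one_mul, Function.iterate_succ_apply]
    exact ih (fun x hx ↦ hφ x (hsupp hx)) (fun x hx ↦ hc x (hsupp hx))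
      (fun x hx ↦ hcφ x (hsupp hx)) (contDiff_infty_iff_deriv.mp hbc).2
      (hbs.mono' ((subset_tsupport _).trans tsupport_mul_subset_left)).deriv

end OscillatoryIntegral

theorem norm_iterate_deriv_mul_inv_deriv_le {φ : ℝ → ℝ} {a : ℝ → ℂ} {s R M : ℝ} {N : ℕ}
    (hR : 0 < R) (hM : 1 ≤ M) (hφ : ContDiffAt ℝ (N + 1 : ℕ) φ s) (ha : ContDiffAt ℝ N a s)
    (hφ' : deriv φ s ≠ 0)
    (hφB : ∀ j, 2 ≤ j → j ≤ N + 1 → |iteratedDeriv j φ s| ≤ M * |deriv φ s| ^ j / R ^ (j - 1))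
    (haB : ∀ j ≤ N, ‖iteratedDeriv j a s‖ ≤ M * |deriv φ s| ^ j / R ^ j) :
    ‖(fun f ↦ deriv (f * fun x ↦ (((deriv φ x)⁻¹ : ℝ) : ℂ)))^[N] a s‖ ≤
      M * (2 ^ N * invDerivConst M N) ^ N / R ^ N := by
  set g := deriv φ
  set ρ := |g s| / R
  have hρ : 0 ≤ ρ := by positivity
  have hg : ContDiffAt ℝ N g s := hφ.derivWithin (by push_cast; rfl)
  have hgB : DerivsBoundedAt g s N (M * ‖g s‖) ρ := by
    rintro (_ | i) hi
    · simpa using le_mul_of_one_le_left (norm_nonneg (g s)) hM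
    · have := hφB (i + 2) (by omega) (by omega)
      rw [iteratedDeriv_succ', show i + 2 - 1 = i + 1 by omega] at this
      rw [Real.norm_eq_abs, Real.norm_eq_abs]
      refine this.trans_eq ?_
      rw [div_pow]
      field_simp
      ring
  have hc : ContDiffAt ℝ N (fun x ↦ (((deriv φ x)⁻¹ : ℝ) : ℂ)) s :=
    ofRealCLM.contDiff.contDiffAt.comp s (hg.inv hφ')
  have hcB : DerivsBoundedAt (fun x ↦ (((deriv φ x)⁻¹ : ℝ) : ℂ)) s N
      (invDerivConst M N / ‖g s‖) ρ :=
    (hgB.inv hg hφ' hρ).comp_linearIsometry ofRealLI (hg.inv hφ')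
  have haB' : DerivsBoundedAt a s N M ρ := fun j hj ↦ (haB j hj).trans_eq (by ring)
  have := (haB'.iterate_deriv_mul ha hc hcB hρ le_rfl).2 0 (Nat.zero_le _)
  rw [iteratedDeriv_zero, pow_zero, mul_one] at this
  refine this.trans_eq ?_
  simp only [ρ, Real.norm_eq_abs]
  field_simp
  rw [div_pow, div_mul_cancel₀ _ (by positivity)]

theorem norm_integral_cexp_mul_le_of_nonstationary {φ : ℝ → ℝ} {a : ℝ → ℂ} {R M : ℝ} {N : ℕ}
    (hR : 0 < R) (hM : 1 ≤ M) (ha : ContDiff ℝ ∞ a) (has : HasCompactSupport a)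
    (hφ : ∀ s ∈ tsupport a, ContDiffAt ℝ ∞ φ s) (hφ' : ∀ s ∈ tsupport a, deriv φ s ≠ 0)
    (hφB : ∀ s ∈ tsupport a, ∀ j, 2 ≤ j → j ≤ N + 1 →
      |iteratedDeriv j φ s| ≤ M * |deriv φ s| ^ j / R ^ (j - 1))
    (haB : ∀ s ∈ tsupport a, ∀ j ≤ N, ‖iteratedDeriv j a s‖ ≤ M * |deriv φ s| ^ j / R ^ j) :
    ‖∫ s, cexp (I * φ s) * a s‖ ≤
      M * (2 ^ N * invDerivConst M N) ^ N / R ^ N * (volume (tsupport a)).toReal := by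
  calc ‖∫ s, cexp (I * φ s) * a s‖
      = ‖∫ s, cexp (I * φ s) *
          ((fun f ↦ deriv (f * fun x ↦ (((deriv φ x)⁻¹ : ℝ) : ℂ)))^[N] a) s‖ :=
        norm_integral_cexp_mul_eq_iterate_deriv_mul (c := fun x ↦ (((deriv φ x)⁻¹ : ℝ) : ℂ))
          (fun s hs ↦ (hφ s hs).differentiableAt (by simp))
          (fun s hs ↦ ofRealCLM.contDiff.contDiffAt.comp s
            (((hφ s hs).derivWithin (by simp)).inv (hφ' s hs)))
          (fun s hs ↦ by rw [← ofReal_mul, mul_inv_cancel₀ (hφ' s hs), ofReal_one])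
          ha has N
    _ ≤ _ :=
        norm_integral_cexp_mul_le has
          (fun s hs ↦ image_eq_zero_of_notMem_tsupport
            fun h ↦ hs (tsupport_iterate_deriv_mul_subset N h))
          fun s hs ↦ norm_iterate_deriv_mul_inv_deriv_le hR hM
            ((hφ s hs).of_le (by exact_mod_cast le_top))
            (ha.contDiffAt.of_le (by exact_mod_cast le_top)) (hφ' s hs) (hφB s hs) (haB s hs)

theorem statement17
    (N : ℕ) (Cs : ℕ → ℝ) (hCs : ∀ j, 1 ≤ Cs j) :
    ∃ CN : ℝ, 0 < CN ∧
      ∀ α β : ℝ, ∀ a : ℝ → ℂ, ∀ φ : ℝ → ℝ,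
        ContDiff ℝ (⊤ : ℕ∞) a → HasCompactSupport a → tsupport a ⊆ Set.Ioo α β →
        ContDiffOn ℝ (⊤ : ℕ∞) φ (Set.Ioo α β) →
        ∀ R : ℝ, 1 ≤ R →
        (∀ s ∈ tsupport a, iteratedDerivWithin 1 φ (Set.Ioo α β) s ≠ 0) →
        (∀ s ∈ tsupport a, ∀ j : ℕ, 2 ≤ j → j ≤ N + 1 →
          |iteratedDerivWithin j φ (Set.Ioo α β) s|
            ≤ Cs j * |iteratedDerivWithin 1 φ (Set.Ioo α β) s| ^ j / R ^ (j - 1)) →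
        (∀ s ∈ tsupport a, ∀ j : ℕ, j ≤ N + 1 →
          ‖iteratedDeriv j a s‖
            ≤ Cs j * |iteratedDerivWithin 1 φ (Set.Ioo α β) s| ^ j / R ^ j) →
        ‖∫ s : ℝ, Complex.exp (Complex.I * (φ s : ℂ)) * a s‖
          ≤ CN * (volume (tsupport a)).toReal * R ^ (-(N : ℝ)) := by
  set M := ∑ j ∈ Finset.range (N + 2), Cs j
  have hCM : ∀ j ≤ N + 1, Cs j ≤ M := fun j hj ↦
    Finset.single_le_sum (fun i _ ↦ zero_le_one.trans (hCs i)) (Finset.mem_range.2 (by omega))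
  have hM : 1 ≤ M := (hCs 0).trans (hCM 0 (by omega))
  have hC := one_le_invDerivConst M N
  refine ⟨M * (2 ^ N * invDerivConst M N) ^ N, by positivity, ?_⟩
  intro α β a φ ha has haI hφ R hR hφ' hφB haB
  have hD : ∀ s ∈ tsupport a, ∀ j, iteratedDerivWithin j φ (Ioo α β) s = iteratedDeriv j φ s :=
    fun s hs j ↦ iteratedDerivWithin_of_isOpen isOpen_Ioo (haI hs)
  have hbound := norm_integral_cexp_mul_le_of_nonstationary (by linarith) hM ha has
    (fun s hs ↦ hφ.contDiffAt (isOpen_Ioo.mem_nhds (haI hs)))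
    (fun s hs ↦ by simpa [hD s hs] using hφ' s hs)
    (fun s hs j h2 hj ↦ by
      have := hφB s hs j h2 hj
      rw [hD s hs, hD s hs, iteratedDeriv_one] at this
      exact this.trans (by gcongr; exact hCM j hj))
    (fun s hs j hj ↦ by
      have := haB s hs j (by omega)
      rw [hD s hs, iteratedDeriv_one] at this
      exact this.trans (by gcongr; exact hCM j (by omega)))
  rw [rpow_neg (by linarith), rpow_natCast]
  convert hbound using 1
  ring
end

section
/- For every j ∈ ℕ and every C ≥ 1 there exists a constant C' > 0, depending only on j and C, with the following property. Let Ω, I ⊆ ℝ be open intervals, G : Ω × I → ℂ smooth with ∂_y G nonvanishing on Ω × I, and y : Ω → I smooth with G(x, y(x)) = 0 for all x ∈ Ω. Suppose A, M₁, M₂ > 0 are such that |∂_y G(x, y(x))| ≥ A M₂ for all x ∈ Ω, and |∂_x^{α₁} ∂_y^{α₂} G(x, y(x))| ≤ C A M₁^{α₁} M₂^{α₂} for all x ∈ Ω and all (α₁, α₂) ∈ ℕ₀² ∖ {(0,0)}. Then |y^{(j)}(x)| ≤ C' M₁^{j} M₂^{−1} for all x ∈ Ω. Moreover, for every N ∈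 ℕ there is C'' > 0 depending only on N and C such that if additionally H : Ω × I → ℂ is smooth and B > 0 satisfies |∂_x^{α₁} ∂_y^{α₂} H(x, y(x))| ≤ C B M₁^{α₁} M₂^{α₂} for all x ∈ Ω and all (α₁, α₂) ∈ ℕ₀² ∖ {(0,0)}, then |(d/dx)^N [H(x, y(x))]| ≤ C'' B M₁^{N} for all x ∈ Ω. -/
/-!
Along the graph `u(t) = (t, y t)` the chain rule gives `(H ∘ u)' = ∂_x H ∘ u + y' · ∂_y H ∘ u`,
and bounds of the form `|∂^α H| ≤ C B M₁^{α₁} M₂^{α₂}` (for `α ≠ 0`) pass to `∂_x H` and `∂_y H`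
as bounds for all `α`, with `B` replaced by `B M₁` and `B M₂`. A simultaneous induction on `n`
then bounds `(H ∘ u)^{(n)}` by `c B M₁^n` and `y^{(n+1)}` by `c M₁^{n+1} / M₂`: the Leibniz rule
handles `y' · ∂_y H ∘ u`, and in the `n`-th derivative of `(G ∘ u)' = 0` the only term containing
`y^{(n+1)}` is `y^{(n+1)} · ∂_y G ∘ u`, which is isolated using `|∂_y G| ≥ A M₂`.
-/

open MeasureTheory Real Set
open scoped InnerProductSpace ENNReal NNReal

noncomputable section

/-- The mixed partial derivative `∂_x^{a₁} ∂_y^{a₂} F` of a function on `ℝ × ℝ`,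
realized as iterated line derivatives in the coordinate directions. -/
def mixedPartial (a₁ a₂ : ℕ) (F : ℝ × ℝ → ℂ) : ℝ × ℝ → ℂ :=
  (List.replicate a₁ ((1 : ℝ), (0 : ℝ)) ++ List.replicate a₂ ((0 : ℝ), (1 : ℝ))).foldr
    (fun w g => fun q => lineDeriv ℝ g q w) F

open Topology Finset
open scoped ContDiff

section PartialDeriv

variable {E F : Type*} [NormedAddCommGroup E] [NormedSpace ℝ E]
  [NormedAddCommGroup F] [NormedSpace ℝ F] {U : Set E} {f g : E → F}

def partialDeriv (v : E) (f : E → F) : E → F := fun q => lineDeriv ℝ f q v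

lemma partialDeriv_eqOn_fderiv (hU : IsOpen U) (hf : DifferentiableOn ℝ f U) (v : E) :
    EqOn (partialDeriv v f) (fun q => fderiv ℝ f q v) U :=
  fun _ hq => ((hf _ hq).differentiableAt (hU.mem_nhds hq)).lineDeriv_eq_fderiv

lemma partialDeriv_congr (hU : IsOpen U) (h : EqOn f g U) (v : E) :
    EqOn (partialDeriv v f) (partialDeriv v g) U :=
  fun _ hq => (Filter.eventuallyEq_of_mem (hU.mem_nhds hq) h).lineDeriv_eq

lemma iterate_partialDeriv_congr (hU : IsOpen U) (h : EqOn f g U) (v : E) (n : ℕ) :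
    EqOn ((partialDeriv v)^[n] f) ((partialDeriv v)^[n] g) U := by
  induction n generalizing f g with
  | zero => exact h
  | succ n ih => exact ih (partialDeriv_congr hU h v)

lemma ContDiffOn.partialDeriv_of_isOpen {m n : WithTop ℕ∞} (hU : IsOpen U)
    (hf : ContDiffOn ℝ n f U) (hmn : m + 1 ≤ n) (v : E) : ContDiffOn ℝ m (partialDeriv v f) U :=
  ((ContinuousLinearMap.apply ℝ F v).contDiff.comp_contDiffOn (hf.fderiv_of_isOpen hU hmn)).congr
    (partialDeriv_eqOn_fderiv hU
      (hf.differentiableOn (zero_lt_one.trans_le (le_add_self.trans hmn)).ne') v)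

lemma ContDiffOn.iterate_partialDeriv (hU : IsOpen U) (hf : ContDiffOn ℝ ∞ f U) (v : E)
    (n : ℕ) : ContDiffOn ℝ ∞ ((partialDeriv v)^[n] f) U := by
  induction n generalizing f with
  | zero => exact hf
  | succ n ih => exact ih (hf.partialDeriv_of_isOpen hU (by simp) v)

lemma partialDeriv_comm (hU : IsOpen U) (hf : ContDiffOn ℝ 2 f U) {q : E} (hq : q ∈ U)
    (v w : E) : partialDeriv v (partialDeriv w f) q = partialDeriv w (partialDeriv v f) q := by
  have hfq : ContDiffAt ℝ 2 f q := hf.contDiffAt (hU.mem_nhds hq)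
  have hd : DifferentiableAt ℝ (fderiv ℝ f) q :=
    (hfq.fderiv_right (m := 1) le_rfl).differentiableAt one_ne_zero
  have second : ∀ a b, partialDeriv a (partialDeriv b f) q = fderiv ℝ (fderiv ℝ f) q a b := by
    intro a b
    have hb : partialDeriv b f =ᶠ[𝓝 q] fun p => fderiv ℝ f p b := Filter.eventuallyEq_of_mem
      (hU.mem_nhds hq) (partialDeriv_eqOn_fderiv hU (hf.differentiableOn (by norm_num)) b)
    rw [partialDeriv, hb.lineDeriv_eq,
      (hd.clm_apply (differentiableAt_const b)).lineDeriv_eq_fderiv, fderiv_clm_apply hd (differentiableAt_const b)]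
    simp
  rw [second, second]
  exact (hfq.isSymmSndFDerivAt (by simp)).eq v w

lemma partialDeriv_iterate_partialDeriv (hU : IsOpen U) (hf : ContDiffOn ℝ ∞ f U) (v w : E)
    (n : ℕ) : EqOn (partialDeriv v ((partialDeriv w)^[n] f))
      ((partialDeriv w)^[n] (partialDeriv v f)) U := by
  induction n with
  | zero => exact fun _ _ => rfl
  | succ n ih =>
    intro q hq
    rw [Function.iterate_succ_apply', Function.iterate_succ_apply',
      partialDeriv_comm hU ((hf.iterate_partialDeriv hU w n).of_le (by norm_cast)) hq]
    exact partialDeriv_congr hU ih w hq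

end PartialDeriv

lemma List.foldr_replicate_eq_iterate {α β : Type*} (f : α → β → β) (a : α) (b : β) (n : ℕ) :
    (List.replicate n a).foldr f b = (f a)^[n] b := by
  induction n with
  | zero => rfl
  | succ n ih => rw [List.replicate_succ, List.foldr_cons, ih, Function.iterate_succ_apply']

lemma mixedPartial_eq_iterate (a₁ a₂ : ℕ) (F : ℝ × ℝ → ℂ) :
    mixedPartial a₁ a₂ F = (partialDeriv (1, 0))^[a₁] ((partialDeriv (0, 1))^[a₂] F) := by
  simp only [mixedPartial, List.foldr_append, List.foldr_replicate_eq_iterate]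
  rfl

lemma mixedPartial_partialDeriv_snd (a₁ a₂ : ℕ) (F : ℝ × ℝ → ℂ) :
    mixedPartial a₁ a₂ (partialDeriv (0, 1) F) = mixedPartial a₁ (a₂ + 1) F := by
  simp only [mixedPartial_eq_iterate, Function.iterate_succ_apply]

lemma mixedPartial_partialDeriv_fst {U : Set (ℝ × ℝ)} (hU : IsOpen U) {F : ℝ × ℝ → ℂ}
    (hF : ContDiffOn ℝ ∞ F U) (a₁ a₂ : ℕ) :
    EqOn (mixedPartial a₁ a₂ (partialDeriv (1, 0) F)) (mixedPartial (a₁ + 1) a₂ F) U := by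
  simp only [mixedPartial_eq_iterate, Function.iterate_succ_apply]
  exact iterate_partialDeriv_congr hU (partialDeriv_iterate_partialDeriv hU hF _ _ a₂).symm _ a₁

lemma HasDerivWithinAt.partialDeriv_graph {F : Type*} [NormedAddCommGroup F] [NormedSpace ℝ F]
    {H : ℝ × ℝ → F} {y : ℝ → ℝ} {y' x : ℝ} {s : Set ℝ} (hH : DifferentiableAt ℝ H (x, y x))
    (hy : HasDerivWithinAt y y' s x) :
    HasDerivWithinAt (fun t => H (t, y t))
      (partialDeriv (1, 0) H (x, y x) + y' • partialDeriv (0, 1) H (x, y x)) s x := by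
  have hdir : ((1 : ℝ), y') = (1, 0) + y' • (0, 1) := by simp
  have := hH.hasFDerivAt.comp_hasDerivWithinAt x ((hasDerivWithinAt_id x s).prodMk hy)
  rwa [hdir, map_add, map_smul, ← hH.lineDeriv_eq_fderiv, ← hH.lineDeriv_eq_fderiv] at this

lemma norm_sum_choose_mul_le {n m : ℕ} (hm : m ≤ n + 1) {a b : ℕ → ℂ} {P Q M : ℝ}
    (hM : 0 ≤ M) (hP : 0 ≤ P) (ha : ∀ i < m, ‖a i‖ ≤ P * M ^ i)
    (hb : ∀ i ≤ n, ‖b i‖ ≤ Q * M ^ i) :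
    ‖∑ i ∈ range m, (n.choose i : ℂ) * a i * b (n - i)‖ ≤ 2 ^ n * (P * Q * M ^ n) := by
  have hQ : 0 ≤ Q := by simpa using (norm_nonneg _).trans (hb 0 (Nat.zero_le n))
  have term : ∀ i ∈ range m,
      ‖(n.choose i : ℂ) * a i * b (n - i)‖ ≤ n.choose i * (P * Q * M ^ n) := by
    intro i hi
    have hin : i ≤ n := by have := mem_range.1 hi; omega
    have hab : ‖a i‖ * ‖b (n - i)‖ ≤ P * M ^ i * (Q * M ^ (n - i)) :=
      mul_le_mul (ha i (mem_range.1 hi)) (hb _ (n.sub_le i)) (norm_nonneg _)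
        ((norm_nonneg _).trans (ha i (mem_range.1 hi)))
    rw [norm_mul, norm_mul, Complex.norm_natCast, mul_assoc]
    calc (n.choose i : ℝ) * (‖a i‖ * ‖b (n - i)‖)
        ≤ n.choose i * (P * M ^ i * (Q * M ^ (n - i))) := by gcongr
      _ = n.choose i * (P * Q * M ^ n) := by
        rw [← Nat.add_sub_cancel' hin, pow_add, Nat.add_sub_cancel_left]; ring
  have choose_sum : ∑ i ∈ range m, (n.choose i : ℝ) ≤ 2 ^ n := by
    calc ∑ i ∈ range m, (n.choose i : ℝ) ≤ ∑ i ∈ range (n + 1), (n.choose i : ℝ) :=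
          sum_le_sum_of_subset_of_nonneg (range_mono hm) (fun _ _ _ => by positivity)
      _ = 2 ^ n := by exact_mod_cast n.sum_range_choose
  calc _ ≤ ∑ i ∈ range m, ‖(n.choose i : ℂ) * a i * b (n - i)‖ := norm_sum_le _ _
    _ ≤ ∑ i ∈ range m, (n.choose i : ℝ) * (P * Q * M ^ n) := sum_le_sum term
    _ = (∑ i ∈ range m, (n.choose i : ℝ)) * (P * Q * M ^ n) := (sum_mul _ _ _).symm
    _ ≤ 2 ^ n * (P * Q * M ^ n) := by gcongr

lemma norm_iteratedDerivWithin_mul_le {s : Set ℝ} (hs : UniqueDiffOn ℝ s) {f g : ℝ → ℂ}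
    {n : ℕ} (hf : ContDiffOn ℝ n f s) (hg : ContDiffOn ℝ n g s) {x : ℝ} (hx : x ∈ s)
    {P Q M : ℝ} (hM : 0 ≤ M) (hfb : ∀ i ≤ n, ‖iteratedDerivWithin i f s x‖ ≤ P * M ^ i)
    (hgb : ∀ i ≤ n, ‖iteratedDerivWithin i g s x‖ ≤ Q * M ^ i) :
    ‖iteratedDerivWithin n (f * g) s x‖ ≤ 2 ^ n * (P * Q * M ^ n) := by
  have hP : 0 ≤ P := by simpa using (norm_nonneg _).trans (hfb 0 (Nat.zero_le n))
  rw [iteratedDerivWithin_mul hx hs (hf x hx) (hg x hx)]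
  exact norm_sum_choose_mul_le (a := (iteratedDerivWithin · f s x))
    (b := (iteratedDerivWithin · g s x)) le_rfl hM hP (fun i hi => hfb i (Nat.lt_succ_iff.1 hi))
    hgb

lemma norm_iteratedDerivWithin_ofReal {s : Set ℝ} (hs : UniqueDiffOn ℝ s) {f : ℝ → ℝ} {n : ℕ}
    (hf : ContDiffOn ℝ n f s) {x : ℝ} (hx : x ∈ s) :
    ‖iteratedDerivWithin n (fun t => (f t : ℂ)) s x‖ = |iteratedDerivWithin n f s x| := by
  have h := Complex.ofRealLI.norm_iteratedFDerivWithin_comp_left (hf x hx) hs hx le_rfl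
  rwa [norm_iteratedFDerivWithin_eq_norm_iteratedDerivWithin,
    norm_iteratedFDerivWithin_eq_norm_iteratedDerivWithin] at h

structure ImplicitSetup (C : ℝ) where
  Ω : Set ℝ
  I : Set ℝ
  isOpen_Ω : IsOpen Ω
  isOpen_I : IsOpen I
  G : ℝ × ℝ → ℂ
  contDiffOn_G : ContDiffOn ℝ ∞ G (Ω ×ˢ I)
  y : ℝ → ℝ
  contDiffOn_y : ContDiffOn ℝ ∞ y Ω
  mapsTo_y : MapsTo y Ω I
  G_graph : ∀ x ∈ Ω, G (x, y x) = 0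
  A : ℝ
  M₁ : ℝ
  M₂ : ℝ
  A_pos : 0 < A
  M₁_nonneg : 0 ≤ M₁
  M₂_pos : 0 < M₂
  partialDeriv_snd_G_ge : ∀ x ∈ Ω, A * M₂ ≤ ‖mixedPartial 0 1 G (x, y x)‖
  mixedPartial_G_le : ∀ x ∈ Ω, ∀ α₁ α₂ : ℕ, (α₁, α₂) ≠ (0, 0) →
    ‖mixedPartial α₁ α₂ G (x, y x)‖ ≤ C * A * M₁ ^ α₁ * M₂ ^ α₂

namespace ImplicitSetup

variable {C : ℝ} (X : ImplicitSetup C)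

def domain : Set (ℝ × ℝ) := X.Ω ×ˢ X.I

lemma isOpen_domain : IsOpen X.domain := X.isOpen_Ω.prod X.isOpen_I

lemma mk_mem_domain {x : ℝ} (hx : x ∈ X.Ω) : (x, X.y x) ∈ X.domain := ⟨hx, X.mapsTo_y hx⟩

def onGraph (H : ℝ × ℝ → ℂ) : ℝ → ℂ := fun t => H (t, X.y t)

def dy : ℝ → ℂ := fun t => ((derivWithin X.y X.Ω t : ℝ) : ℂ)

def PartialsBounded (B : ℝ) (H : ℝ × ℝ → ℂ) : Prop :=
  ∀ x ∈ X.Ω, ∀ α₁ α₂ : ℕ, ‖mixedPartial α₁ α₂ H (x, X.y x)‖ ≤ C * B * X.M₁ ^ α₁ * X.M₂ ^ α₂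

def HigherPartialsBounded (B : ℝ) (H : ℝ × ℝ → ℂ) : Prop :=
  ∀ x ∈ X.Ω, ∀ α₁ α₂ : ℕ, (α₁, α₂) ≠ (0, 0) →
    ‖mixedPartial α₁ α₂ H (x, X.y x)‖ ≤ C * B * X.M₁ ^ α₁ * X.M₂ ^ α₂

variable {X} {B : ℝ} {H : ℝ × ℝ → ℂ}

lemma PartialsBounded.higher (h : X.PartialsBounded B H) : X.HigherPartialsBounded B H :=
  fun x hx α₁ α₂ _ => h x hx α₁ α₂

lemma HigherPartialsBounded.partialDeriv_fst (hH : ContDiffOn ℝ ∞ H X.domain)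
    (h : X.HigherPartialsBounded B H) : X.PartialsBounded (B * X.M₁) (partialDeriv (1, 0) H) := by
  intro x hx α₁ α₂
  rw [mixedPartial_partialDeriv_fst X.isOpen_domain hH α₁ α₂ (X.mk_mem_domain hx)]
  calc _ ≤ C * B * X.M₁ ^ (α₁ + 1) * X.M₂ ^ α₂ := h x hx _ _ (by simp)
    _ = _ := by ring

lemma HigherPartialsBounded.partialDeriv_snd (h : X.HigherPartialsBounded B H) :
    X.PartialsBounded (B * X.M₂) (partialDeriv (0, 1) H) := by
  intro x hx α₁ α₂
  rw [mixedPartial_partialDeriv_snd]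
  calc _ ≤ C * B * X.M₁ ^ α₁ * X.M₂ ^ (α₂ + 1) := h x hx _ _ (by simp)
    _ = _ := by ring

variable (X)

lemma higherPartialsBounded_G : X.HigherPartialsBounded X.A X.G := X.mixedPartial_G_le

lemma contDiffOn_onGraph (hH : ContDiffOn ℝ ∞ H X.domain) : ContDiffOn ℝ ∞ (X.onGraph H) X.Ω :=
  hH.comp (contDiffOn_id.prodMk X.contDiffOn_y) fun _ hx => X.mk_mem_domain hx

lemma contDiffOn_dy : ContDiffOn ℝ ∞ X.dy X.Ω :=
  Complex.ofRealCLM.contDiff.comp_contDiffOn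
    (X.contDiffOn_y.derivWithin X.isOpen_Ω.uniqueDiffOn (by simp))

lemma derivWithin_onGraph (hH : ContDiffOn ℝ ∞ H X.domain) :
    EqOn (derivWithin (X.onGraph H) X.Ω)
      (X.onGraph (partialDeriv (1, 0) H) + X.dy * X.onGraph (partialDeriv (0, 1) H)) X.Ω := by
  intro x hx
  have hHx : DifferentiableAt ℝ H (x, X.y x) :=
    (hH.contDiffAt (X.isOpen_domain.mem_nhds (X.mk_mem_domain hx))).differentiableAt (by simp)
  have hy := ((X.contDiffOn_y.differentiableOn (by simp)) x hx).hasDerivWithinAt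
  have := (hy.partialDeriv_graph hHx).derivWithin (X.isOpen_Ω.uniqueDiffOn x hx)
  rwa [Complex.real_smul] at this

lemma iteratedDerivWithin_succ_onGraph (hH : ContDiffOn ℝ ∞ H X.domain) (n : ℕ) {x : ℝ}
    (hx : x ∈ X.Ω) :
    iteratedDerivWithin (n + 1) (X.onGraph H) X.Ω x =
      iteratedDerivWithin n (X.onGraph (partialDeriv (1, 0) H)) X.Ω x +
        iteratedDerivWithin n (X.dy * X.onGraph (partialDeriv (0, 1) H)) X.Ω x := by
  have hsmooth (v : ℝ × ℝ) : ContDiffOn ℝ ∞ (X.onGraph (partialDeriv v H)) X.Ω :=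
    X.contDiffOn_onGraph (hH.partialDeriv_of_isOpen X.isOpen_domain (by simp) v)
  rw [iteratedDerivWithin_succ', iteratedDerivWithin_congr (X.derivWithin_onGraph hH) hx,
    iteratedDerivWithin_add hx X.isOpen_Ω.uniqueDiffOn]
  · exact ((hsmooth _).of_le (by exact_mod_cast le_top)).contDiffWithinAt hx
  · exact ((X.contDiffOn_dy.mul (hsmooth _)).of_le (by exact_mod_cast le_top)).contDiffWithinAt hx

lemma norm_iteratedDerivWithin_dy (k : ℕ) {x : ℝ} (hx : x ∈ X.Ω) :
    ‖iteratedDerivWithin k X.dy X.Ω x‖ = |iteratedDerivWithin (k + 1) X.y X.Ω x| := by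
  rw [iteratedDerivWithin_succ']
  exact norm_iteratedDerivWithin_ofReal X.isOpen_Ω.uniqueDiffOn
    ((X.contDiffOn_y.derivWithin X.isOpen_Ω.uniqueDiffOn (m := ∞) (by simp)).of_le
      (by exact_mod_cast le_top)) hx

def OnGraphBound (n : ℕ) (c : ℝ) : Prop :=
  ∀ H : ℝ × ℝ → ℂ, ContDiffOn ℝ ∞ H X.domain → ∀ B, 0 ≤ B → X.PartialsBounded B H →
    ∀ k ≤ n, ∀ x ∈ X.Ω, ‖iteratedDerivWithin k (X.onGraph H) X.Ω x‖ ≤ c * B * X.M₁ ^ k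

def SlopeBound (n : ℕ) (c : ℝ) : Prop :=
  ∀ k < n, ∀ x ∈ X.Ω, ‖iteratedDerivWithin k X.dy X.Ω x‖ ≤ c * X.M₁ / X.M₂ * X.M₁ ^ k

variable {X} {n : ℕ} {c c' : ℝ}

lemma OnGraphBound.mono (h : X.OnGraphBound n c) (hcc' : c ≤ c') : X.OnGraphBound n c' :=
  fun H hH B hB hHB k hk x hx => (h H hH B hB hHB k hk x hx).trans
    (mul_le_mul_of_nonneg_right (mul_le_mul_of_nonneg_right hcc' hB) (pow_nonneg X.M₁_nonneg k))

lemma SlopeBound.mono (h : X.SlopeBound n c) (hcc' : c ≤ c') : X.SlopeBound n c' :=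
  fun k hk x hx => (h k hk x hx).trans <| mul_le_mul_of_nonneg_right
    (div_le_div_of_nonneg_right (mul_le_mul_of_nonneg_right hcc' X.M₁_nonneg) X.M₂_pos.le)
    (pow_nonneg X.M₁_nonneg k)

variable (X)

lemma onGraphBound_zero : X.OnGraphBound 0 (max C 1) := by
  intro H _ B hB hHB k hk x hx
  obtain rfl : k = 0 := Nat.le_zero.1 hk
  calc ‖iteratedDerivWithin 0 (X.onGraph H) X.Ω x‖ = ‖mixedPartial 0 0 H (x, X.y x)‖ := by
        rw [iteratedDerivWithin_zero]; rfl
    _ ≤ C * B * X.M₁ ^ 0 * X.M₂ ^ 0 := hHB x hx 0 0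
    _ ≤ max C 1 * B * X.M₁ ^ 0 := by
      simpa using mul_le_mul_of_nonneg_right (le_max_left C 1) hB

lemma slopeBound_zero (c : ℝ) : X.SlopeBound 0 c := fun _ hk => absurd hk (Nat.not_lt_zero _)

variable {X}

lemma norm_iteratedDerivWithin_succ_onGraph_le (hK : X.OnGraphBound n c)
    (hY : X.SlopeBound (n + 1) c) {B : ℝ} {H : ℝ × ℝ → ℂ}
    (hH : ContDiffOn ℝ ∞ H X.domain) (hB : 0 ≤ B) (hHB : X.HigherPartialsBounded B H) {x : ℝ}
    (hx : x ∈ X.Ω) :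
    ‖iteratedDerivWithin (n + 1) (X.onGraph H) X.Ω x‖ ≤
      (c + 2 ^ n * c ^ 2) * B * X.M₁ ^ (n + 1) := by
  have hHx := hH.partialDeriv_of_isOpen X.isOpen_domain (m := ∞) (by simp) (1, 0)
  have hHy := hH.partialDeriv_of_isOpen X.isOpen_domain (m := ∞) (by simp) (0, 1)
  have hM₁ := X.M₁_nonneg
  have hM₂ := X.M₂_pos
  have h_fst : ‖iteratedDerivWithin n (X.onGraph (partialDeriv (1, 0) H)) X.Ω x‖ ≤
      c * (B * X.M₁) * X.M₁ ^ n :=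
    hK _ hHx _ (mul_nonneg hB hM₁) (hHB.partialDeriv_fst hH) n le_rfl x hx
  have h_snd : ‖iteratedDerivWithin n (X.dy * X.onGraph (partialDeriv (0, 1) H)) X.Ω x‖ ≤
      2 ^ n * (c * X.M₁ / X.M₂ * (c * (B * X.M₂)) * X.M₁ ^ n) :=
    norm_iteratedDerivWithin_mul_le X.isOpen_Ω.uniqueDiffOn
      (X.contDiffOn_dy.of_le (by exact_mod_cast le_top))
      ((X.contDiffOn_onGraph hHy).of_le (by exact_mod_cast le_top)) hx hM₁
      (fun i hi => hY i (Nat.lt_succ_of_le hi) x hx)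
      (fun i hi => hK _ hHy _ (mul_nonneg hB hM₂.le) hHB.partialDeriv_snd i hi x hx)
  rw [X.iteratedDerivWithin_succ_onGraph hH n hx]
  calc _ ≤ _ := norm_add_le _ _
    _ ≤ _ := add_le_add h_fst h_snd
    _ = (c + 2 ^ n * c ^ 2) * B * X.M₁ ^ (n + 1) := by field_simp [hM₂.ne']; ring

lemma OnGraphBound.succ (hK : X.OnGraphBound n c) (hY : X.SlopeBound (n + 1) c) :
    X.OnGraphBound (n + 1) (c + 2 ^ n * c ^ 2) := by
  intro H hH B hB hHB k hk x hx
  rcases hk.lt_or_eq with hk | rfl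
  · exact hK.mono (le_add_of_nonneg_right (by positivity)) H hH B hB hHB k
      (Nat.lt_succ_iff.1 hk) x hx
  · exact norm_iteratedDerivWithin_succ_onGraph_le hK hY hH hB hHB.higher hx

lemma norm_iteratedDerivWithin_dy_le (hK : X.OnGraphBound n c) (hY : X.SlopeBound n c)
    (hc : 0 ≤ c) {x : ℝ} (hx : x ∈ X.Ω) :
    ‖iteratedDerivWithin n X.dy X.Ω x‖ ≤ (c + 2 ^ n * c ^ 2) * X.M₁ / X.M₂ * X.M₁ ^ n := by
  set g := X.onGraph (partialDeriv (0, 1) X.G)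
  have hGx := X.contDiffOn_G.partialDeriv_of_isOpen X.isOpen_domain (m := ∞) (by simp) (1, 0)
  have hGy := X.contDiffOn_G.partialDeriv_of_isOpen X.isOpen_domain (m := ∞) (by simp) (0, 1)
  have hM₁ := X.M₁_nonneg
  have hAM₂ := mul_pos X.A_pos X.M₂_pos
  have hzero : iteratedDerivWithin (n + 1) (X.onGraph X.G) X.Ω x = 0 := by
    rw [iteratedDerivWithin_congr (f := X.onGraph X.G) (g := 0) X.G_graph hx]
    exact iteratedDerivWithin_const_zero
  rw [X.iteratedDerivWithin_succ_onGraph X.contDiffOn_G n hx,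
    iteratedDerivWithin_mul hx X.isOpen_Ω.uniqueDiffOn
      ((X.contDiffOn_dy.of_le (by exact_mod_cast le_top)) x hx)
      (((X.contDiffOn_onGraph hGy).of_le (by exact_mod_cast le_top)) x hx),
    sum_range_succ, Nat.choose_self, Nat.cast_one, one_mul, Nat.sub_self,
    iteratedDerivWithin_zero] at hzero
  have h_fst : ‖iteratedDerivWithin n (X.onGraph (partialDeriv (1, 0) X.G)) X.Ω x‖ ≤
      c * (X.A * X.M₁) * X.M₁ ^ n :=
    hK _ hGx _ (mul_nonneg X.A_pos.le hM₁)
      (X.higherPartialsBounded_G.partialDeriv_fst X.contDiffOn_G) n le_rfl x hx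
  have h_sum : ‖∑ i ∈ range n, (n.choose i : ℂ) * iteratedDerivWithin i X.dy X.Ω x *
      iteratedDerivWithin (n - i) g X.Ω x‖ ≤
      2 ^ n * (c * X.M₁ / X.M₂ * (c * (X.A * X.M₂)) * X.M₁ ^ n) :=
    norm_sum_choose_mul_le (a := (iteratedDerivWithin · X.dy X.Ω x))
      (b := (iteratedDerivWithin · g X.Ω x)) n.le_succ hM₁
      (div_nonneg (mul_nonneg hc hM₁) X.M₂_pos.le)
      (fun i hi => hY i hi x hx)
      (fun i hi => hK _ hGy _ hAM₂.le X.higherPartialsBounded_G.partialDeriv_snd i hi x hx)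
  refine le_of_mul_le_mul_right ?_ hAM₂
  calc ‖iteratedDerivWithin n X.dy X.Ω x‖ * (X.A * X.M₂)
      ≤ ‖iteratedDerivWithin n X.dy X.Ω x‖ * ‖g x‖ := by
        gcongr; exact X.partialDeriv_snd_G_ge x hx
    _ = ‖iteratedDerivWithin n (X.onGraph (partialDeriv (1, 0) X.G)) X.Ω x +
          ∑ i ∈ range n, (n.choose i : ℂ) * iteratedDerivWithin i X.dy X.Ω x *
            iteratedDerivWithin (n - i) g X.Ω x‖ := by
        rw [← norm_mul, ← norm_neg]; congr 1; linear_combination -hzero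
    _ ≤ c * (X.A * X.M₁) * X.M₁ ^ n +
          2 ^ n * (c * X.M₁ / X.M₂ * (c * (X.A * X.M₂)) * X.M₁ ^ n) :=
        (norm_add_le _ _).trans (add_le_add h_fst h_sum)
    _ = (c + 2 ^ n * c ^ 2) * X.M₁ / X.M₂ * X.M₁ ^ n * (X.A * X.M₂) := by
        field_simp [X.M₂_pos.ne']

lemma SlopeBound.succ (hK : X.OnGraphBound n c) (hY : X.SlopeBound n c) (hc : 0 ≤ c) :
    X.SlopeBound (n + 1) (c + 2 ^ n * c ^ 2) := by
  intro k hk x hx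
  rcases (Nat.lt_succ_iff.1 hk).lt_or_eq with hk | rfl
  · exact hY.mono (le_add_of_nonneg_right (by positivity)) k hk x hx
  · exact norm_iteratedDerivWithin_dy_le hK hY hc hx

theorem exists_onGraphBound_slopeBound (C : ℝ) (n : ℕ) :
    ∃ c, 0 < c ∧ ∀ X : ImplicitSetup C, X.OnGraphBound n c ∧ X.SlopeBound (n + 1) c := by
  induction n with
  | zero =>
    have hc : 0 < max C 1 := lt_max_of_lt_right one_pos
    refine ⟨_, by positivity, fun X => ⟨?_, (X.slopeBound_zero _).succ X.onGraphBound_zero hc.le⟩⟩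
    exact X.onGraphBound_zero.mono (le_add_of_nonneg_right (by positivity))
  | succ n ih =>
    obtain ⟨c, hc, h⟩ := ih
    have hc' : 0 < c + 2 ^ n * c ^ 2 := by positivity
    refine ⟨(c + 2 ^ n * c ^ 2) + 2 ^ (n + 1) * (c + 2 ^ n * c ^ 2) ^ 2, by positivity,
      fun X => ?_⟩
    obtain ⟨hK, hY⟩ := h X
    have hK' := hK.succ hY
    exact ⟨hK'.mono (le_add_of_nonneg_right (by positivity)),
      (hY.mono (le_add_of_nonneg_right (by positivity))).succ hK' hc'.le⟩

end ImplicitSetup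

theorem statement18_general
    (j N : ℕ) (hj : 1 ≤ j) (hN : 1 ≤ N) (C : ℝ) :
    ∃ C' : ℝ, 0 < C' ∧ ∃ C'' : ℝ, 0 < C'' ∧
      ∀ Ω I : Set ℝ, IsOpen Ω → Ω.OrdConnected → IsOpen I → I.OrdConnected →
      ∀ G : ℝ × ℝ → ℂ, ContDiffOn ℝ (⊤ : ℕ∞) G (Ω ×ˢ I) →
        (∀ p ∈ Ω ×ˢ I, mixedPartial 0 1 G p ≠ 0) →
      ∀ y : ℝ → ℝ, ContDiffOn ℝ (⊤ : ℕ∞) y Ω → (∀ x ∈ Ω, y x ∈ I) →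
        (∀ x ∈ Ω, G (x, y x) = 0) →
      ∀ A M₁ M₂ : ℝ, 0 < A → 0 < M₁ → 0 < M₂ →
        (∀ x ∈ Ω, A * M₂ ≤ ‖mixedPartial 0 1 G (x, y x)‖) →
        (∀ x ∈ Ω, ∀ α₁ α₂ : ℕ, (α₁, α₂) ≠ (0, 0) →
          ‖mixedPartial α₁ α₂ G (x, y x)‖ ≤ C * A * M₁ ^ α₁ * M₂ ^ α₂) →
        (∀ x ∈ Ω, |iteratedDerivWithin j y Ω x| ≤ C' * M₁ ^ j / M₂) ∧
        (∀ H : ℝ × ℝ → ℂ, ContDiffOn ℝ (⊤ : ℕ∞) H (Ω ×ˢ I) →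
          ∀ B : ℝ, 0 < B →
          (∀ x ∈ Ω, ∀ α₁ α₂ : ℕ, (α₁, α₂) ≠ (0, 0) →
            ‖mixedPartial α₁ α₂ H (x, y x)‖ ≤ C * B * M₁ ^ α₁ * M₂ ^ α₂) →
          ∀ x ∈ Ω, ‖iteratedDerivWithin N (fun x' => H (x', y x')) Ω x‖ ≤ C'' * B * M₁ ^ N) := by
  obtain ⟨j, rfl⟩ := Nat.exists_eq_add_of_le' hj
  obtain ⟨N, rfl⟩ := Nat.exists_eq_add_of_le' hN
  obtain ⟨c, hc, hcX⟩ := ImplicitSetup.exists_onGraphBound_slopeBound C j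
  obtain ⟨c', hc', hc'X⟩ := ImplicitSetup.exists_onGraphBound_slopeBound C N
  refine ⟨c, hc, c' + 2 ^ N * c' ^ 2, by positivity, ?_⟩
  intro Ω I hΩ _ hI _ G hG _ y hy hyI hGy A M₁ M₂ hA hM₁ hM₂ hGy_ge hG_le
  let X : ImplicitSetup C :=
    ⟨Ω, I, hΩ, hI, G, hG, y, hy, hyI, hGy, A, M₁, M₂, hA, hM₁.le, hM₂, hGy_ge, hG_le⟩
  refine ⟨fun x hx => ?_, fun H hH B hB hHB x hx => ?_⟩
  · rw [← X.norm_iteratedDerivWithin_dy j hx]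
    calc _ ≤ c * M₁ / M₂ * M₁ ^ j := (hcX X).2 j j.lt_succ_self x hx
      _ = c * M₁ ^ (j + 1) / M₂ := by ring
  · exact ImplicitSetup.norm_iteratedDerivWithin_succ_onGraph_le (hc'X X).1 (hc'X X).2 hH hB.le
      hHB hx

theorem statement18
    (j N : ℕ) (hj : 1 ≤ j) (hN : 1 ≤ N) (C : ℝ) (hC : 1 ≤ C) :
    ∃ C' : ℝ, 0 < C' ∧ ∃ C'' : ℝ, 0 < C'' ∧
      ∀ Ω I : Set ℝ, IsOpen Ω → Ω.OrdConnected → IsOpen I → I.OrdConnected →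
      ∀ G : ℝ × ℝ → ℂ, ContDiffOn ℝ (⊤ : ℕ∞) G (Ω ×ˢ I) →
        (∀ p ∈ Ω ×ˢ I, mixedPartial 0 1 G p ≠ 0) →
      ∀ y : ℝ → ℝ, ContDiffOn ℝ (⊤ : ℕ∞) y Ω → (∀ x ∈ Ω, y x ∈ I) →
        (∀ x ∈ Ω, G (x, y x) = 0) →
      ∀ A M₁ M₂ : ℝ, 0 < A → 0 < M₁ → 0 < M₂ →
        (∀ x ∈ Ω, A * M₂ ≤ ‖mixedPartial 0 1 G (x, y x)‖) →
        (∀ x ∈ Ω, ∀ α₁ α₂ : ℕ, (α₁, α₂) ≠ (0, 0) →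
          ‖mixedPartial α₁ α₂ G (x, y x)‖ ≤ C * A * M₁ ^ α₁ * M₂ ^ α₂) →
        (∀ x ∈ Ω, |iteratedDerivWithin j y Ω x| ≤ C' * M₁ ^ j / M₂) ∧
        (∀ H : ℝ × ℝ → ℂ, ContDiffOn ℝ (⊤ : ℕ∞) H (Ω ×ˢ I) →
          ∀ B : ℝ, 0 < B →
          (∀ x ∈ Ω, ∀ α₁ α₂ : ℕ, (α₁, α₂) ≠ (0, 0) →
            ‖mixedPartial α₁ α₂ H (x, y x)‖ ≤ C * B * M₁ ^ α₁ * M₂ ^ α₂) →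
          ∀ x ∈ Ω, ‖iteratedDerivWithin N (fun x' => H (x', y x')) Ω x‖ ≤ C'' * B * M₁ ^ N) :=
  statement18_general j N hj hN C
end
end
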